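/- arXiv:1611.07682 — 2 statements merged into one kernel-verified Lean document; each statement's English description precedes it below -/
import Mathlib

section
/- Let I = (K_n^*, s, t, c, Q) be a QSPP instance with n ≥ 4, c = 0, and q_{ef} = 0 for every pair of arcs not contained together in any s-t path. Then the average cost of all s-t paths of length k is at most the average cost of all s-t paths of length k+1, i.e., CP_k / |P_k| ≤ CP_{k+1} / |P_{k+1}| for every k = 3, …, n−2, where |P_k| = C(n−2, k−1)·(k−1)!. -/
/-- An `s`-`t` path in the digraph on vertex type `V` with arc relation `A`,
represented as the list of its (distinct) vertices. -/
def IsPath {V : Type*} (A : V → V → Prop) (s t : V) (P : List V) : Prop :=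
  2 ≤ P.length ∧ P.head? = some s ∧ P.getLast? = some t ∧ P.Nodup ∧ P.Chain' A

/-- The arcs traversed by a path, as the list of ordered pairs of consecutive vertices. -/
def arcsOf {V : Type*} (P : List V) : List (V × V) :=
  P.zip P.tail

/-- Linear cost `C(P,c)` of a path. -/
noncomputable def linCost {V : Type*} (c : V × V → ℝ) (P : List V) : ℝ :=
  ((arcsOf P).map c).sum

/-- Total (quadratic) cost `C(P,c,Q)` of a path: the sum of the interaction costs over all
ordered pairs of arcs of `P` plus the sum of the linear costs of the arcs of `P`. -/
noncomputable def cost {V : Type*} (c : V × V → ℝ) (Q : V × V → V × V → ℝ)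
    (P : List V) : ℝ :=
  ((arcsOf P).map fun e => ((arcsOf P).map fun f => Q e f).sum).sum + linCost c P

/-- A QSPP instance `(G,s,t,c,Q)` is linearizable if there is a nonnegative cost vector `c'`
such that `C(P,c,Q) = C(P,c')` for every `s`-`t` path `P`. -/
def Linearizable {V : Type*} (A : V → V → Prop) (s t : V) (c : V × V → ℝ)
    (Q : V × V → V × V → ℝ) : Prop :=
  ∃ c' : V × V → ℝ, (∀ e, 0 ≤ c' e) ∧
    ∀ P, IsPath A s t P → cost c Q P = linCost c' P

/-- The arc relation of the complete symmetric digraph `K_n^*` on vertices `1,…,n`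
with source `1` and target `n`, from which the incoming arcs of the source, the
outgoing arcs of the target and the arc from source to target have been removed. -/
def knArc (n : ℕ) : ℕ → ℕ → Prop := fun i j =>
  1 ≤ i ∧ i ≤ n ∧ 1 ≤ j ∧ j ≤ n ∧ i ≠ j ∧ j ≠ 1 ∧ i ≠ n ∧ ¬(i = 1 ∧ j = n)

/-- `CP_k`: the total cost (with zero linear costs) of all `s`-`t` paths of length `k`
in `K_n^*`. -/
noncomputable def CPsum (n : ℕ) (Q : ℕ × ℕ → ℕ × ℕ → ℝ) (k : ℕ) : ℝ :=
  ∑ᶠ (P : List ℕ) (_ : IsPath (knArc n) 1 n P ∧ P.length = k + 1),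
    cost (fun _ => 0) Q P

/-!
Write `CP_k = ∑_{e,f} q_{ef} N_k(e,f)`, where `N_k(e,f)` counts the paths of length `k` using
both arcs `e` and `f`. Since `|P_{k+1}| = (n-1-k) |P_k|` and `q_{ee} = 0`, it suffices to show
`(n-1-k) N_k(e,f) ≤ N_{k+1}(e,f)` for `e ≠ f`. Double count the pairs `P ⊂ P'` of such paths of
lengths `k` and `k+1`: inserting one of the `n-1-k` unused vertices into one of the at least
`k-2` gaps of `P` not spanned by `e` or `f` gives at least `(n-1-k)(k-2)` distinct `P'` above
each `P`; conversely `P` is `P'` minus one vertex, which must avoid `s`, `t` and the (at least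
two) interior endpoints of `e` and `f`, so at most `k-2` paths `P` lie below each `P'`.
-/

open Finset
open scoped List

section Arcs

variable {V : Type*}

theorem getElem?_arcsOf_eq_some {P : List V} {m : ℕ} {u v : V} :
    (arcsOf P)[m]? = some (u, v) ↔ P[m]? = some u ∧ P[m + 1]? = some v := by
  simp [arcsOf, List.getElem?_zip_eq_some]

theorem length_arcsOf (P : List V) : (arcsOf P).length = P.length - 1 := by
  simp [arcsOf]

theorem mem_of_mem_arcsOf {P : List V} {g : V × V} (hg : g ∈ arcsOf P) :
    g.1 ∈ P ∧ g.2 ∈ P := by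
  obtain ⟨m, hm⟩ := List.mem_iff_getElem?.1 hg
  rw [← Prod.mk.eta (p := g), getElem?_arcsOf_eq_some] at hm
  exact ⟨List.mem_of_getElem? hm.1, List.mem_of_getElem? hm.2⟩

theorem nodup_arcsOf {P : List V} (hP : P.Nodup) : (arcsOf P).Nodup :=
  List.Nodup.of_map Prod.snd <| by
    rw [arcsOf, List.map_snd_zip (by simp)]
    exact hP.sublist (List.tail_sublist P)

theorem mem_arcsOf_insertIdx {P : List V} {g : V × V} {i : ℕ} (x : V) (hg : g ∈ arcsOf P)
    (hi : (arcsOf P)[i]? ≠ some g) : g ∈ arcsOf (P.insertIdx (i + 1) x) := by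
  obtain ⟨j, hj⟩ := List.mem_iff_getElem?.1 hg
  have hji : j ≠ i := by rintro rfl; exact hi hj
  rw [← Prod.mk.eta (p := g), getElem?_arcsOf_eq_some] at hj
  rw [List.mem_iff_getElem?]
  rcases hji.lt_or_gt with h | h
  · refine ⟨j, ?_⟩
    rwa [← Prod.mk.eta (p := g), getElem?_arcsOf_eq_some,
      List.getElem?_insertIdx_of_lt (by omega), List.getElem?_insertIdx_of_lt (by omega)]
  · refine ⟨j + 1, ?_⟩
    rwa [← Prod.mk.eta (p := g), getElem?_arcsOf_eq_some,
      List.getElem?_insertIdx_of_gt (by omega), List.getElem?_insertIdx_of_gt (by omega),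
      Nat.add_sub_cancel, Nat.add_sub_cancel]

end Arcs

namespace List

variable {α : Type*}

theorem Nodup.length_sub_two_le_card_filter [DecidableEq α] {l : List α} (hl : l.Nodup)
    (a b : α) : l.length - 2 ≤
      #((Finset.range l.length).filter fun i => l[i]? ≠ some a ∧ l[i]? ≠ some b) := by
  have hsub : Finset.range l.length \ {l.idxOf a, l.idxOf b} ⊆
      (Finset.range l.length).filter fun i => l[i]? ≠ some a ∧ l[i]? ≠ some b := by
    intro i hi
    simp only [Finset.mem_sdiff, Finset.mem_insert, Finset.mem_singleton, not_or] at hi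
    refine Finset.mem_filter.2 ⟨hi.1, ?_, ?_⟩ <;> intro h <;>
      obtain ⟨hi', rfl⟩ := getElem?_eq_some_iff.1 h
    exacts [hi.2.1 (hl.idxOf_getElem i hi').symm, hi.2.2 (hl.idxOf_getElem i hi').symm]
  calc l.length - 2 ≤ #(Finset.range l.length) - #{l.idxOf a, l.idxOf b} := by
        rw [card_range]; have := card_le_two (a := l.idxOf a) (b := l.idxOf b); omega
    _ ≤ _ := (le_card_sdiff _ _).trans (card_le_card hsub)

theorem insertIdx_inj_of_notMem {l : List α} (hl : l.Nodup) {x y : α} {i j : ℕ} (hx : x ∉ l)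
    (hy : y ∉ l) (hi : i ≤ l.length) (hj : j ≤ l.length)
    (h : l.insertIdx i x = l.insertIdx j y) :
    x = y ∧ i = j := by
  obtain rfl : x = y := by
    have : x ∈ l.insertIdx j y := h ▸ (mem_insertIdx hi).2 (Or.inl rfl)
    exact ((mem_insertIdx hj).1 this).resolve_right hx
  have hnd : (l.insertIdx i x).Nodup :=
    (perm_insertIdx x l hi).nodup_iff.2 (nodup_cons.2 ⟨hx, hl⟩)
  refine ⟨rfl, (getElem?_inj (by simp [length_insertIdx_of_le_length hi]; omega) hnd).1 ?_⟩
  rw [getElem?_insertIdx_self, if_pos hi, h, getElem?_insertIdx_self, if_pos hj]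

theorem Sublist.exists_eq_erase [DecidableEq α] {l l' : List α} (h : l <+ l') (hl' : l'.Nodup)
    (hlen : l.length + 1 = l'.length) : ∃ x ∈ l', x ∉ l ∧ l = l'.erase x := by
  obtain ⟨x, hx, hxl⟩ : ∃ x ∈ l', x ∉ l := by
    by_contra! hsub
    have := hl'.length_le_of_subset hsub
    omega
  refine ⟨x, hx, hxl, (?_ : l <+ l'.erase x).eq_of_length ?_⟩
  · simpa [erase_of_not_mem hxl] using h.erase x
  · rw [length_erase_of_mem hx]; omega

end List

section Kn

variable {n k : ℕ} {P : List ℕ}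

theorem isPath_knArc_iff : IsPath (knArc n) 1 n P ↔ 3 ≤ P.length ∧ P[0]? = some 1 ∧
    P[P.length - 1]? = some n ∧ P.Nodup ∧ ∀ v ∈ P, 1 ≤ v ∧ v ≤ n := by
  rw [IsPath, List.head?_eq_getElem?, List.getLast?_eq_getElem?, List.Chain',
    List.isChain_iff_getElem]
  constructor
  · rintro ⟨h2, h0, hK, hnd, harc⟩
    refine ⟨?_, h0, hK, hnd, fun v hv => ?_⟩
    · by_contra! hlt
      obtain ⟨_, h0⟩ := List.getElem?_eq_some_iff.1 h0
      obtain ⟨_, hK⟩ := List.getElem?_eq_some_iff.1 hK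
      have h01 := harc 0 (by omega)
      exact h01.2.2.2.2.2.2.2 ⟨h0, by simpa [show P.length - 1 = 1 by omega] using hK⟩
    · obtain ⟨m, hm, rfl⟩ := List.getElem_of_mem hv
      by_cases h : m + 1 < P.length
      · exact ⟨(harc m h).1, (harc m h).2.1⟩
      · obtain ⟨j, rfl⟩ : ∃ j, m = j + 1 := ⟨m - 1, by omega⟩
        exact ⟨(harc j hm).2.2.1, (harc j hm).2.2.2.1⟩
  · rintro ⟨h3, h0, hK, hnd, hV⟩
    refine ⟨by omega, h0, hK, hnd, fun i hi => ?_⟩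
    obtain ⟨_, h0⟩ := List.getElem?_eq_some_iff.1 h0
    obtain ⟨_, hK⟩ := List.getElem?_eq_some_iff.1 hK
    refine ⟨(hV _ (List.getElem_mem _)).1, (hV _ (List.getElem_mem _)).2,
      (hV _ (List.getElem_mem _)).1, (hV _ (List.getElem_mem _)).2, fun h => ?_, fun h => ?_,
      fun h => ?_, fun ⟨h1, h2⟩ => ?_⟩
    · have := hnd.getElem_inj_iff.1 h; omega
    · have := hnd.getElem_inj_iff.1 (h.trans h0.symm); omega
    · have := hnd.getElem_inj_iff.1 (h.trans hK.symm); omega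
    · have := hnd.getElem_inj_iff.1 (h1.trans h0.symm)
      have := hnd.getElem_inj_iff.1 (h2.trans hK.symm)
      omega

theorem IsPath.insertIdx_knArc (hP : IsPath (knArc n) 1 n P) {x i : ℕ} (hx : x ∈ Icc 1 n)
    (hxP : x ∉ P) (hi : i + 1 < P.length) : IsPath (knArc n) 1 n (P.insertIdx (i + 1) x) := by
  rw [isPath_knArc_iff] at hP ⊢
  obtain ⟨h3, h0, hK, hnd, hV⟩ := hP
  have hlen := List.length_insertIdx_of_le_length hi.le x
  refine ⟨by omega, ?_, ?_, ?_, fun v hv => ?_⟩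
  · rwa [List.getElem?_insertIdx_of_lt (by omega)]
  · rwa [hlen, List.getElem?_insertIdx_of_gt (by omega), Nat.add_sub_cancel]
  · exact (List.perm_insertIdx x P hi.le).nodup_iff.2 (List.nodup_cons.2 ⟨hxP, hnd⟩)
  · rcases (List.mem_insertIdx hi.le).1 hv with rfl | hv
    exacts [mem_Icc.1 hx, hV v hv]

theorem setOf_isPath_knArc_finite (n k : ℕ) :
    {P | IsPath (knArc n) 1 n P ∧ P.length = k + 1}.Finite := by
  refine ((List.finite_length_eq (Fin (n + 1)) (k + 1)).image (List.map Fin.val)).subset ?_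
  rintro P ⟨hP, hlen⟩
  have hV := (isPath_knArc_iff.1 hP).2.2.2.2
  lift P to List (Fin (n + 1)) using fun v hv => Nat.lt_succ_of_le (hV v hv).2
  exact ⟨P, by simpa using hlen, rfl⟩

noncomputable def knPaths (n k : ℕ) : Finset (List ℕ) :=
  (setOf_isPath_knArc_finite n k).toFinset

theorem mem_knPaths : P ∈ knPaths n k ↔ IsPath (knArc n) 1 n P ∧ P.length = k + 1 :=
  Set.Finite.mem_toFinset _

noncomputable def knPathsThrough (n k : ℕ) (a b : ℕ × ℕ) : Finset (List ℕ) :=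
  (knPaths n k).filter fun P => a ∈ arcsOf P ∧ b ∈ arcsOf P

end Kn

section Counting

variable {n k : ℕ} {a b : ℕ × ℕ} {P P' : List ℕ}

theorem card_Icc_sdiff_toFinset (hP : P ∈ knPaths n k) :
    #(Icc 1 n \ P.toFinset) = n - (k + 1) := by
  obtain ⟨hpath, hlen⟩ := mem_knPaths.1 hP
  obtain ⟨-, -, -, hnd, hV⟩ := isPath_knArc_iff.1 hpath
  rw [card_sdiff_of_subset fun v hv => mem_Icc.2 (hV v (List.mem_toFinset.1 hv)), Nat.card_Icc,
    List.toFinset_card_of_nodup hnd, hlen, Nat.add_sub_cancel]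

theorem le_card_knPathsThrough_succ_sublist (hP : P ∈ knPathsThrough n k a b) :
    (n - (k + 1)) * (k - 2) ≤ #((knPathsThrough n (k + 1) a b).filter (P <+ ·)) := by
  obtain ⟨hPk, ha, hb⟩ := mem_filter.1 hP
  obtain ⟨hpath, hlen⟩ := mem_knPaths.1 hPk
  have hnd := (isPath_knArc_iff.1 hpath).2.2.2.1
  set gaps := (range k).filter fun i => (arcsOf P)[i]? ≠ some a ∧ (arcsOf P)[i]? ≠ some b
  have hgaps : k - 2 ≤ #gaps := by
    simpa [length_arcsOf, hlen] using (nodup_arcsOf hnd).length_sub_two_le_card_filter a b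
  calc (n - (k + 1)) * (k - 2) ≤ #((Icc 1 n \ P.toFinset) ×ˢ gaps) := by
        rw [card_product, card_Icc_sdiff_toFinset hPk]; exact Nat.mul_le_mul_left _ hgaps
    _ = #(((Icc 1 n \ P.toFinset) ×ˢ gaps).image fun xi => P.insertIdx (xi.2 + 1) xi.1) := by
        refine (card_image_of_injOn fun ⟨x, i⟩ hxi ⟨y, j⟩ hyj h => ?_).symm
        simp only [coe_product, Set.mem_prod, mem_coe, mem_sdiff, List.mem_toFinset, gaps,
          mem_filter, mem_range] at hxi hyj
        obtain ⟨rfl, hij⟩ := List.insertIdx_inj_of_notMem hnd hxi.1.2 hyj.1.2 (by omega)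
          (by omega) h
        simp only [Prod.mk.injEq, true_and]; omega
    _ ≤ _ := by
        refine card_le_card fun P' hP' => ?_
        obtain ⟨⟨x, i⟩, hxi, rfl⟩ := mem_image.1 hP'
        simp only [mem_product, mem_sdiff, List.mem_toFinset, gaps, mem_filter, mem_range] at hxi
        obtain ⟨⟨hx, hxP⟩, hi, hia, hib⟩ := hxi
        refine mem_filter.2 ⟨mem_filter.2 ⟨mem_knPaths.2
          ⟨hpath.insertIdx_knArc hx hxP (by omega), ?_⟩, mem_arcsOf_insertIdx x ha hia,
          mem_arcsOf_insertIdx x hb hib⟩, List.sublist_insertIdx P _ x⟩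
        rw [List.length_insertIdx_of_le_length (by omega), hlen]

theorem one_lt_card_endpoints_sdiff (hP : IsPath (knArc n) 1 n P) (hlen : 4 ≤ P.length)
    (ha : a ∈ arcsOf P) (hb : b ∈ arcsOf P) (hab : a ≠ b) :
    1 < #(({a.1, a.2, b.1, b.2} : Finset ℕ) \ {1, n}) := by
  obtain ⟨-, h0, hK, hnd, -⟩ := isPath_knArc_iff.1 hP
  obtain ⟨i, hi⟩ := List.mem_iff_getElem?.1 ha
  obtain ⟨j, hj⟩ := List.mem_iff_getElem?.1 hb
  have hij : i ≠ j := by rintro rfl; exact hab (Option.some_injective _ (hi.symm.trans hj))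
  wlog hlt : i < j generalizing a b i j
  · convert this hb ha hab.symm j hj i hi hij.symm (by omega) using 2
    congr 1; ext; simp only [mem_insert, mem_singleton]; tauto
  rw [← Prod.mk.eta (p := a), getElem?_arcsOf_eq_some] at hi
  rw [← Prod.mk.eta (p := b), getElem?_arcsOf_eq_some] at hj
  have hjK : j + 1 < P.length := (List.getElem?_eq_some_iff.1 hj.2).1
  have inj : ∀ {m m' v}, m < P.length → P[m]? = some v → P[m']? = some v → m = m' :=
    fun hm h h' => (List.getElem?_inj hm hnd).1 (h.trans h'.symm)
  have interior : ∀ {m v}, P[m]? = some v → 0 < m → m + 1 < P.length →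
      v ∉ ({1, n} : Finset ℕ) := by
    intro m v hv hm hm'
    simp only [mem_insert, mem_singleton, not_or]
    exact ⟨fun h => by have := inj (by omega) (h ▸ hv) h0; omega,
      fun h => by have := inj (by omega) (h ▸ hv) hK; omega⟩
  rw [one_lt_card_iff]
  rcases (show i + 1 < j ∨ (i + 1 = j ∧ 0 < i) ∨ (i = 0 ∧ j = 1) by omega) with h | h | h
  · refine ⟨a.2, b.1, mem_sdiff.2 ⟨by simp, interior hi.2 (by omega) (by omega)⟩,
      mem_sdiff.2 ⟨by simp, interior hj.1 (by omega) (by omega)⟩, fun h' => ?_⟩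
    have := inj (by omega) (h' ▸ hi.2) hj.1; omega
  · refine ⟨a.1, a.2, mem_sdiff.2 ⟨by simp, interior hi.1 (by omega) (by omega)⟩,
      mem_sdiff.2 ⟨by simp, interior hi.2 (by omega) (by omega)⟩, fun h' => ?_⟩
    have := inj (by omega) (h' ▸ hi.1) hi.2; omega
  · refine ⟨a.2, b.2, mem_sdiff.2 ⟨by simp, interior hi.2 (by omega) (by omega)⟩,
      mem_sdiff.2 ⟨by simp, interior hj.2 (by omega) (by omega)⟩, fun h' => ?_⟩
    have := inj (by omega) (h' ▸ hi.2) hj.2; omega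

theorem card_knPathsThrough_sublist_le (hk : 3 ≤ k) (hab : a ≠ b)
    (hP' : P' ∈ knPathsThrough n (k + 1) a b) :
    #((knPathsThrough n k a b).filter (· <+ P')) ≤ k - 2 := by
  obtain ⟨hP'k, ha', hb'⟩ := mem_filter.1 hP'
  obtain ⟨hpath', hlen'⟩ := mem_knPaths.1 hP'k
  obtain ⟨-, h0', hK', hnd', -⟩ := isPath_knArc_iff.1 hpath'
  set F : Finset ℕ := {a.1, a.2, b.1, b.2} ∪ {1, n}
  have hF : 4 ≤ #F := by
    have h1n : (1 : ℕ) ≠ n := by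
      intro h; subst h
      have := (List.getElem?_inj (by omega) hnd').1 (h0'.trans hK'.symm); omega
    rw [← card_sdiff_add_card, card_pair h1n]
    have := one_lt_card_endpoints_sdiff hpath' (by omega) ha' hb' hab
    omega
  have hFsub : ∀ {R : List ℕ}, IsPath (knArc n) 1 n R → a ∈ arcsOf R → b ∈ arcsOf R →
      F ⊆ R.toFinset := by
    intro R hR ha hb v hv
    obtain ⟨-, h0, hK, -, -⟩ := isPath_knArc_iff.1 hR
    have := mem_of_mem_arcsOf ha; have := mem_of_mem_arcsOf hb
    simp only [F, mem_union, mem_insert, mem_singleton] at hv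
    rw [List.mem_toFinset]
    rcases hv with (rfl | rfl | rfl | rfl) | (rfl | rfl) <;>
      first | tauto | exact List.mem_of_getElem? h0 | exact List.mem_of_getElem? hK
  calc #((knPathsThrough n k a b).filter (· <+ P'))
      ≤ #((P'.toFinset \ F).image P'.erase) := by
        refine card_le_card fun P hP => ?_
        obtain ⟨hPk, hsub⟩ := mem_filter.1 hP
        obtain ⟨hPk, ha, hb⟩ := mem_filter.1 hPk
        obtain ⟨hpath, hlen⟩ := mem_knPaths.1 hPk
        obtain ⟨x, hx, hxP, rfl⟩ := hsub.exists_eq_erase hnd' (by omega)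
        exact mem_image.2 ⟨x, mem_sdiff.2 ⟨List.mem_toFinset.2 hx,
          fun hxF => hxP (List.mem_toFinset.1 (hFsub hpath ha hb hxF))⟩, rfl⟩
    _ ≤ #(P'.toFinset \ F) := card_image_le
    _ ≤ k - 2 := by
        rw [card_sdiff_of_subset (hFsub hpath' ha' hb'), List.toFinset_card_of_nodup hnd', hlen']
        omega

theorem card_knPathsThrough_le (hk : 3 ≤ k) (hab : a ≠ b) :
    (n - (k + 1)) * #(knPathsThrough n k a b) ≤ #(knPathsThrough n (k + 1) a b) := by
  have := card_mul_le_card_mul (fun P P' : List ℕ => P <+ P')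
    (fun P hP => le_card_knPathsThrough_succ_sublist (n := n) hP)
    (fun P' hP' => card_knPathsThrough_sublist_le hk hab hP')
  refine Nat.le_of_mul_le_mul_right ?_ (show 0 < k - 2 by omega)
  calc _ = #(knPathsThrough n k a b) * ((n - (k + 1)) * (k - 2)) := by ring
    _ ≤ _ := this

end Counting

theorem cost_zero_eq_sum {V : Type*} [DecidableEq V] (Q : V × V → V × V → ℝ) {P : List V}
    {B : Finset (V × V)} (hB : ∀ g ∈ arcsOf P, g ∈ B) (hnd : (arcsOf P).Nodup) :
    cost (fun _ => 0) Q P =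
      ∑ e ∈ B, ∑ f ∈ B, if e ∈ arcsOf P ∧ f ∈ arcsOf P then Q e f else 0 := by
  have key : ∀ h : V × V → ℝ,
      ((arcsOf P).map h).sum = ∑ e ∈ B, if e ∈ arcsOf P then h e else 0 := by
    intro h
    simp_rw [← List.sum_toFinset h hnd, ← List.mem_toFinset (l := arcsOf P), sum_ite_mem,
      inter_eq_right.2 fun g hg => hB g (List.mem_toFinset.1 hg)]
  simp only [cost, linCost, List.map_const', List.sum_replicate, smul_zero, add_zero, key]
  refine sum_congr rfl fun e _ => ?_
  split_ifs with he <;> simp [he]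

theorem CPsum_eq_sum (n k : ℕ) (Q : ℕ × ℕ → ℕ × ℕ → ℝ) :
    CPsum n Q k = ∑ e ∈ Icc 1 n ×ˢ Icc 1 n, ∑ f ∈ Icc 1 n ×ˢ Icc 1 n,
      Q e f * #(knPathsThrough n k e f) := by
  have hpaths : CPsum n Q k = ∑ P ∈ knPaths n k, cost (fun _ => 0) Q P :=
    finsum_mem_eq_finite_toFinset_sum _ (setOf_isPath_knArc_finite n k)
  have harcs : ∀ P ∈ knPaths n k, ∀ g ∈ arcsOf P, g ∈ Icc 1 n ×ˢ Icc 1 n := by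
    intro P hP g hg
    have hV := (isPath_knArc_iff.1 (mem_knPaths.1 hP).1).2.2.2.2
    exact mem_product.2 ⟨mem_Icc.2 (hV _ (mem_of_mem_arcsOf hg).1),
      mem_Icc.2 (hV _ (mem_of_mem_arcsOf hg).2)⟩
  rw [hpaths, sum_congr rfl fun P hP => cost_zero_eq_sum Q (harcs P hP)
    (nodup_arcsOf (isPath_knArc_iff.1 (mem_knPaths.1 hP).1).2.2.2.1), sum_comm]
  refine sum_congr rfl fun e _ => ?_
  rw [sum_comm]
  refine sum_congr rfl fun f _ => ?_
  rw [← sum_filter, sum_const, nsmul_eq_mul, mul_comm, knPathsThrough]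

theorem mul_CPsum_le_CPsum_succ {n k : ℕ} {Q : ℕ × ℕ → ℕ × ℕ → ℝ}
    (hQ0 : ∀ e f, 0 ≤ Q e f) (hQd : ∀ e, Q e e = 0) (hk : 3 ≤ k) :
    ((n - (k + 1) : ℕ) : ℝ) * CPsum n Q k ≤ CPsum n Q (k + 1) := by
  rw [CPsum_eq_sum, CPsum_eq_sum, mul_sum]
  refine sum_le_sum fun e _ => ?_
  rw [mul_sum]
  refine sum_le_sum fun f _ => ?_
  rcases eq_or_ne e f with rfl | hef
  · simp [hQd]
  · calc _ = Q e f * ((n - (k + 1) : ℕ) * #(knPathsThrough n k e f) : ℝ) := by ring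
      _ ≤ _ := by
        gcongr
        · exact hQ0 e f
        · exact_mod_cast card_knPathsThrough_le hk hef

theorem stmt_7_general (n : ℕ) (Q : ℕ × ℕ → ℕ × ℕ → ℝ)
    (hQ0 : ∀ e f, 0 ≤ Q e f) (hQd : ∀ e, Q e e = 0) :
    ∀ k, 3 ≤ k → k ≤ n - 2 →
      CPsum n Q k / (((n - 2).choose (k - 1) * Nat.factorial (k - 1) : ℕ) : ℝ) ≤
      CPsum n Q (k + 1) / (((n - 2).choose k * Nat.factorial k : ℕ) : ℝ) := by
  intro k hk hkn
  have hcount : (n - 2).choose k * k.factorial =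
      (n - (k + 1)) * ((n - 2).choose (k - 1) * (k - 1).factorial) := by
    obtain ⟨j, rfl⟩ : ∃ j, k = j + 1 := ⟨k - 1, by omega⟩
    rw [Nat.add_sub_cancel, mul_comm, ← Nat.descFactorial_eq_factorial_mul_choose,
      Nat.descFactorial_succ, Nat.descFactorial_eq_factorial_mul_choose, mul_comm j.factorial]
    congr 1; omega
  rw [hcount, Nat.cast_mul (n - (k + 1)), ← div_div]
  refine div_le_div_of_nonneg_right ?_ (Nat.cast_nonneg _)
  rw [le_div_iff₀ (by exact_mod_cast (show 0 < n - (k + 1) by omega)), mul_comm]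
  exact mul_CPsum_le_CPsum_succ hQ0 hQd hk

/-- On `K_n^*` (`n ≥ 4`), the average cost of the `s`-`t` paths of length `k` is at most
the average cost of the `s`-`t` paths of length `k+1`, for `k = 3,…,n-2`, where the
number of `s`-`t` paths of length `k` is `C(n-2,k-1)·(k-1)!`. -/
theorem stmt_7 (n : ℕ) (hn : 4 ≤ n) (Q : ℕ × ℕ → ℕ × ℕ → ℝ)
    (hQ0 : ∀ e f, 0 ≤ Q e f) (hQs : ∀ e f, Q e f = Q f e) (hQd : ∀ e, Q e e = 0)
    (hQpath : ∀ e f,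
      (¬ ∃ P, IsPath (knArc n) 1 n P ∧ e ∈ arcsOf P ∧ f ∈ arcsOf P) → Q e f = 0) :
    ∀ k, 3 ≤ k → k ≤ n - 2 →
      CPsum n Q k / (((n - 2).choose (k - 1) * Nat.factorial (k - 1) : ℕ) : ℝ) ≤
      CPsum n Q (k + 1) / (((n - 2).choose k * Nat.factorial k : ℕ) : ℝ) :=
  stmt_7_general n Q hQ0 hQd
end

section
/- Let I = (K_n^*, s, t, c, Q) be a QSPP instance with n ≥ 7, c = 0, and q_{ef} = 0 for every pair of arcs not contained together in any s-t path. Then CP_k ≤ (n−k)·((k−3)/(k−5))·CP_{k−1} for every k = 6, …, n−1. -/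
/-!
An `s`-`t` path with `k` arcs in `K_n^*` is `1, M, n` for a list `M` of `k - 1` distinct vertices
of `{2, …, n-1}`. Deleting the interior vertex `M[j]` and then the new shortcut arc leaves exactly
the arcs of the path other than its arcs `j` and `j + 1`; a pair of arcs survives this for at least
`k - 5` of the `k - 1` choices of `j`. Hence `(k - 5) CP_k` is at most the sum, over paths `P'`
with `k - 1` arcs, vertices `w ∉ P'` and arcs `j` of `P'`, of the cost of `P'` without arc `j`
(reinsert `w` after position `j`). The summand does not depend on `w`, which has `n - k` choices,
and a pair of distinct arcs of `P'` survives the deletion of exactly `k - 3` of its arcs.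
-/

open Finset

section PairSum

variable {ι κ : Type*}

def pairSum (G : ι → ι → ℝ) (s : Finset ι) : ℝ :=
  ∑ a ∈ s, ∑ b ∈ s, G a b

theorem sum_pairSum_filter (G : ι → ι → ℝ) (s : Finset ι) (J : Finset κ) (p : κ → ι → Prop)
    [∀ j, DecidablePred (p j)] :
    ∑ j ∈ J, pairSum G {a ∈ s | p j a} = ∑ a ∈ s, ∑ b ∈ s, #{j ∈ J | p j a ∧ p j b} * G a b := by
  simp only [pairSum, sum_filter, ← sum_boole, sum_mul, ite_mul, one_mul, zero_mul]
  rw [sum_comm]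
  refine sum_congr rfl fun a _ => ?_
  rw [← sum_comm]
  refine sum_congr rfl fun j _ => ?_
  split_ifs <;> simp [*]

end PairSum

section ListSums

variable {α M : Type*} [Inhabited α] [AddCommMonoid M]

theorem List.sum_map_eq_sum_range (L : List α) (f : α → M) :
    (L.map f).sum = ∑ a ∈ Finset.range L.length, f L[a]! := by
  rw [← Fin.sum_univ_fun_getElem, ← Fin.sum_univ_eq_sum_range (fun a => f L[a]!)]
  exact Finset.sum_congr rfl fun a _ => by rw [getElem!_pos L a.1 a.2]

theorem List.sum_map_take_append_drop (L : List α) (f : α → M) {i r : ℕ} (h : i + r ≤ L.length) :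
    ((L.take i ++ L.drop (i + r)).map f).sum =
      ∑ a ∈ Finset.range L.length with a ∉ Finset.Ico i (i + r), f L[a]! := by
  have hsplit : {a ∈ Finset.range L.length | a ∉ Finset.Ico i (i + r)} =
      Finset.range i ∪ Finset.Ico (i + r) L.length := by
    ext a; simp only [Finset.mem_filter, Finset.mem_range, Finset.mem_Ico, Finset.mem_union]; omega
  have hdisj : _root_.Disjoint (Finset.range i) (Finset.Ico (i + r) L.length) := by
    rw [Finset.disjoint_left]; intro a; simp only [Finset.mem_range, Finset.mem_Ico]; omega
  rw [hsplit, Finset.sum_union hdisj, List.map_append, List.sum_append, sum_map_eq_sum_range,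
    sum_map_eq_sum_range, Finset.sum_Ico_eq_sum_range, List.length_take, List.length_drop,
    min_eq_left (by omega)]
  congr 1
  · refine Finset.sum_congr rfl fun a ha => ?_
    rw [Finset.mem_range] at ha
    rw [getElem!_pos _ a (by simp; omega), getElem!_pos L a (by omega), List.getElem_take]
  · refine Finset.sum_congr rfl fun a ha => ?_
    rw [Finset.mem_range] at ha
    rw [getElem!_pos _ a (by simp; omega), getElem!_pos L _ (by omega), List.getElem_drop]

end ListSums

theorem le_card_filter_notMem_Ico_add (N r a b : ℕ) :
    N ≤ #{j ∈ range N | a ∉ Ico j (j + r) ∧ b ∉ Ico j (j + r)} + 2 * r := by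
  have hbad : {j ∈ range N | ¬(a ∉ Ico j (j + r) ∧ b ∉ Ico j (j + r))} ⊆
      Icc (a + 1 - r) a ∪ Icc (b + 1 - r) b := by
    intro j
    simp only [mem_filter, mem_range, mem_Ico, mem_union, mem_Icc]
    omega
  have hsplit := card_filter_add_card_filter_not (s := range N)
    (fun j => a ∉ Ico j (j + r) ∧ b ∉ Ico j (j + r))
  have hunion := (card_le_card hbad).trans (card_union_le _ _)
  simp only [card_range, Nat.card_Icc] at hsplit hunion
  omega

section QuadForm

variable {α : Type*} (Q : α → α → ℝ)

def quadForm (L : List α) : ℝ :=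
  (L.map fun e => (L.map (Q e)).sum).sum

variable [Inhabited α]

theorem quadForm_take_append_drop (L : List α) {i r : ℕ} (h : i + r ≤ L.length) :
    quadForm Q (L.take i ++ L.drop (i + r)) =
      pairSum (fun a b => Q L[a]! L[b]!) {a ∈ range L.length | a ∉ Ico i (i + r)} := by
  simp only [quadForm, pairSum, L.sum_map_take_append_drop _ h]

theorem quadForm_eq_pairSum (L : List α) :
    quadForm Q L = pairSum (fun a b => Q L[a]! L[b]!) (range L.length) := by
  simpa using quadForm_take_append_drop Q L (i := 0) (r := 0) (Nat.zero_le _)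

theorem le_sum_quadForm_take_append_drop (hQ : ∀ e f, 0 ≤ Q e f) (L : List α) {N r : ℕ}
    (hN : N + r ≤ L.length + 1) :
    ((N : ℝ) - 2 * r) * quadForm Q L ≤ ∑ j ∈ range N, quadForm Q (L.take j ++ L.drop (j + r)) := by
  rw [sum_congr rfl fun j hj => quadForm_take_append_drop Q L (by rw [mem_range] at hj; omega),
    sum_pairSum_filter _ _ _ (fun j a => a ∉ Ico j (j + r)), quadForm_eq_pairSum, pairSum, mul_sum]
  refine sum_le_sum fun a _ => ?_
  rw [mul_sum]
  refine sum_le_sum fun b _ => mul_le_mul_of_nonneg_right ?_ (hQ _ _)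
  have hcount : (N : ℝ) ≤ #{j ∈ range N | a ∉ Ico j (j + r) ∧ b ∉ Ico j (j + r)} + 2 * r := by
    exact_mod_cast le_card_filter_notMem_Ico_add N r a b
  linarith

theorem sum_quadForm_eraseIdx_le (hQ : ∀ e f, 0 ≤ Q e f) (hQd : ∀ e, Q e e = 0) (L : List α) :
    ∑ j ∈ range L.length, quadForm Q (L.eraseIdx j) ≤ ((L.length : ℝ) - 2) * quadForm Q L := by
  simp_rw [List.eraseIdx_eq_take_drop_succ]
  rw [sum_congr rfl fun j hj => quadForm_take_append_drop Q L (by rw [mem_range] at hj; omega),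
    sum_pairSum_filter _ _ _ (fun j a => a ∉ Ico j (j + 1)), quadForm_eq_pairSum, pairSum, mul_sum]
  refine sum_le_sum fun a ha => ?_
  rw [mul_sum]
  refine sum_le_sum fun b hb => ?_
  rcases eq_or_ne a b with rfl | hab
  · simp [hQd]
  refine mul_le_mul_of_nonneg_right ?_ (hQ _ _)
  have hsub : {j ∈ range L.length | a ∉ Ico j (j + 1) ∧ b ∉ Ico j (j + 1)} ⊆
      ((range L.length).erase a).erase b := by
    intro j
    simp only [mem_filter, mem_range, mem_Ico, mem_erase]
    omega
  have hcard := card_le_card hsub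
  rw [card_erase_of_mem (mem_erase.mpr ⟨hab.symm, hb⟩), card_erase_of_mem ha, card_range] at hcard
  rw [mem_range] at ha hb
  have : (#{j ∈ range L.length | a ∉ Ico j (j + 1) ∧ b ∉ Ico j (j + 1)} : ℝ) + 2 ≤ L.length := by
    exact_mod_cast (by omega : _ + 2 ≤ L.length)
  linarith

end QuadForm

theorem List.insertIdx_inj {α : Type*} {L₁ L₂ : List α} {w₁ w₂ : α} {j : ℕ}
    (h₁ : j ≤ L₁.length) (h₂ : j ≤ L₂.length) (h : L₁.insertIdx j w₁ = L₂.insertIdx j w₂) :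
    L₁ = L₂ ∧ w₁ = w₂ := by
  have hw := congrArg (·[j]?) h
  simp only [getElem?_insertIdx_self, if_pos h₁, if_pos h₂, Option.some.injEq] at hw
  have hL := congrArg (eraseIdx · j) h
  simp only [eraseIdx_insertIdx_self] at hL
  exact ⟨hL, hw⟩

section Arrangements

variable {α : Type*} [DecidableEq α]

noncomputable def arrangements (S : Finset α) (m : ℕ) : Finset (List α) :=
  (S.powersetCard m).biUnion fun t => t.toList.permutations.toFinset

theorem mem_arrangements {S : Finset α} {m : ℕ} {L : List α} :
    L ∈ arrangements S m ↔ L.Nodup ∧ L.length = m ∧ ∀ v ∈ L, v ∈ S := by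
  simp only [arrangements, mem_biUnion, mem_powersetCard, List.mem_toFinset, List.mem_permutations]
  constructor
  · rintro ⟨t, ⟨htS, rfl⟩, hperm⟩
    exact ⟨hperm.nodup_iff.mpr t.nodup_toList, by rw [hperm.length_eq, length_toList],
      fun v hv => htS (mem_toList.mp (hperm.subset hv))⟩
  · rintro ⟨hnd, rfl, hS⟩
    exact ⟨L.toFinset,
      ⟨fun v hv => hS v (List.mem_toFinset.mp hv), List.toFinset_card_of_nodup hnd⟩,
      (List.toFinset_toList hnd).symm⟩

theorem insertIdx_mem_arrangements {S : Finset α} {m j : ℕ} {L : List α} {w : α}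
    (hL : L ∈ arrangements S m) (hwS : w ∈ S) (hwL : w ∉ L) (hj : j ≤ m) :
    L.insertIdx j w ∈ arrangements S (m + 1) := by
  obtain ⟨hnd, hlen, hS⟩ := mem_arrangements.mp hL
  refine mem_arrangements.mpr ⟨?_, ?_, fun v hv => ?_⟩
  · exact (List.perm_insertIdx w L (by omega)).nodup_iff.mpr (List.nodup_cons.mpr ⟨hwL, hnd⟩)
  · rw [List.length_insertIdx_of_le_length (by omega), hlen]
  · rcases (List.mem_insertIdx (by omega)).mp hv with rfl | hv
    exacts [hwS, hS v hv]

theorem eraseIdx_mem_arrangements {S : Finset α} {m j : ℕ} {L : List α}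
    (hL : L ∈ arrangements S (m + 1)) (hj : j < m + 1) : L.eraseIdx j ∈ arrangements S m := by
  obtain ⟨hnd, hlen, hS⟩ := mem_arrangements.mp hL
  refine mem_arrangements.mpr ⟨hnd.sublist (List.eraseIdx_sublist L j), ?_,
    fun v hv => hS v (List.mem_of_mem_eraseIdx hv)⟩
  rw [List.length_eraseIdx_of_lt (by omega), hlen, Nat.add_sub_cancel]

theorem sum_arrangements_succ_eraseIdx {M : Type*} [AddCommMonoid M] (S : Finset α) (m : ℕ)
    (f : List α → ℕ → M) :
    ∑ L ∈ arrangements S (m + 1), ∑ j ∈ range (m + 1), f (L.eraseIdx j) j =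
      ∑ L ∈ arrangements S m, (#S - m) • ∑ j ∈ range (m + 1), f L j := by
  have hcard : ∀ L ∈ arrangements S m, #(S \ L.toFinset) = #S - m := fun L hL => by
    obtain ⟨hnd, hlen, hS⟩ := mem_arrangements.mp hL
    rw [card_sdiff_of_subset (fun v hv => hS v (List.mem_toFinset.mp hv)),
      List.toFinset_card_of_nodup hnd, hlen]
  have hbij :
      ∑ x ∈ ((arrangements S m).sigma fun L => S \ L.toFinset) ×ˢ range (m + 1), f x.1.1 x.2 =
        ∑ x ∈ arrangements S (m + 1) ×ˢ range (m + 1), f (x.1.eraseIdx x.2) x.2 := by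
    refine sum_nbij (fun x => (x.1.1.insertIdx x.2 x.1.2, x.2)) ?_ ?_ ?_ ?_
    · rintro ⟨⟨L, w⟩, j⟩ hx
      simp only [mem_product, mem_sigma, mem_sdiff, List.mem_toFinset, mem_range] at hx ⊢
      exact ⟨insertIdx_mem_arrangements hx.1.1 hx.1.2.1 hx.1.2.2 (by omega), hx.2⟩
    · rintro ⟨⟨L₁, w₁⟩, j₁⟩ hx₁ ⟨⟨L₂, w₂⟩, j₂⟩ hx₂ h
      simp only [coe_product, coe_sigma, Set.mem_prod, Set.mem_sigma_iff, mem_coe, mem_sdiff,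
        mem_range] at hx₁ hx₂
      simp only [Prod.mk.injEq] at h
      obtain ⟨hins, rfl⟩ := h
      have hlen₁ := (mem_arrangements.mp hx₁.1.1).2.1
      have hlen₂ := (mem_arrangements.mp hx₂.1.1).2.1
      obtain ⟨rfl, rfl⟩ := List.insertIdx_inj (by omega) (by omega) hins
      rfl
    · rintro ⟨L, j⟩ hx
      simp only [coe_product, Set.mem_prod, mem_coe, mem_range] at hx
      obtain ⟨hL, hj⟩ := hx
      obtain ⟨hnd, hlen, hS⟩ := mem_arrangements.mp hL
      refine ⟨⟨⟨L.eraseIdx j, L[j]⟩, j⟩, ?_, by simp [List.insertIdx_eraseIdx_getElem]⟩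
      simp only [coe_product, coe_sigma, Set.mem_prod, Set.mem_sigma_iff, mem_coe, mem_sdiff,
        List.mem_toFinset, mem_range]
      refine ⟨⟨eraseIdx_mem_arrangements hL hj, hS _ (List.getElem_mem _), ?_⟩, hj⟩
      rw [← hnd.erase_getElem j]
      exact hnd.not_mem_erase
    · rintro ⟨⟨L, w⟩, j⟩ _
      simp
  simp only [sum_product, sum_sigma] at hbij
  rw [← hbij]
  refine sum_congr rfl fun L hL => ?_
  rw [sum_const, hcard L hL]

end Arrangements

theorem arcsOf_cons_cons {V : Type*} (x y : V) (l : List V) :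
    arcsOf (x :: y :: l) = (x, y) :: arcsOf (y :: l) :=
  rfl

theorem eraseIdx_arcsOf_eraseIdx_succ {V : Type*} (P : List V) (j : ℕ) :
    (arcsOf (P.eraseIdx (j + 1))).eraseIdx j = (arcsOf P).take j ++ (arcsOf P).drop (j + 2) := by
  induction j generalizing P with
  | zero =>
    match P with
    | [] | [_] | [_, _] | _ :: _ :: _ :: _ => rfl
  | succ j ih =>
    match P with
    | [] | [_] => rfl
    | x :: y :: l =>
      have hhead : (y :: l).eraseIdx (j + 1) = y :: l.eraseIdx j := rfl
      rw [List.eraseIdx_cons_succ, hhead, arcsOf_cons_cons, ← hhead, List.eraseIdx_cons_succ, ih,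
        arcsOf_cons_cons]
      rfl

theorem cost_zero_eq_quadForm {V : Type*} (Q : V × V → V × V → ℝ) (P : List V) :
    cost (fun _ => 0) Q P = quadForm Q (arcsOf P) := by
  simp [cost, linCost, quadForm]

def knPath (n : ℕ) (M : List ℕ) : List ℕ :=
  1 :: M ++ [n]

theorem knPath_injective (n : ℕ) : Function.Injective (knPath n) := fun M M' h => by
  simpa [knPath] using h

theorem length_arcsOf_knPath (n : ℕ) (M : List ℕ) :
    (arcsOf (knPath n M)).length = M.length + 1 := by
  simp [arcsOf, knPath]

theorem knPath_eraseIdx (n : ℕ) {M : List ℕ} {j : ℕ} (hj : j < M.length) :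
    knPath n (M.eraseIdx j) = (knPath n M).eraseIdx (j + 1) := by
  simp [knPath, List.eraseIdx_append_of_lt_length hj]

theorem isPath_knPath {n : ℕ} {M : List ℕ} (hM : M ≠ []) (hnd : M.Nodup)
    (hS : ∀ v ∈ M, v ∈ Icc 2 (n - 1)) : IsPath (knArc n) 1 n (knPath n M) := by
  simp only [mem_Icc] at hS
  obtain ⟨a, M', rfl⟩ := List.exists_cons_of_ne_nil hM
  have ha := hS a List.mem_cons_self
  have h1 : 1 ∉ a :: M' := fun h => by have := hS 1 h; omega
  have hn : n ∉ a :: M' := fun h => by have := hS n h; omega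
  refine ⟨by simp [knPath], rfl, List.getLast?_concat .., ?_, ?_⟩
  · simp only [knPath, List.nodup_append, List.nodup_cons]
    refine ⟨⟨h1, List.nodup_cons.mp hnd⟩, by simp, ?_⟩
    intro x hx y hy
    obtain rfl : y = n := by simpa using hy
    rcases List.mem_cons.mp hx with rfl | hx
    · omega
    · exact fun h => hn (h ▸ hx)
  · have hchain : (a :: M').IsChain (knArc n) := (hnd.imp_of_mem fun hx hy hxy => by
      have := hS _ hx; have := hS _ hy; unfold knArc; omega).isChain
    show List.IsChain _ (knPath n _)
    simp only [knPath, List.isChain_append, List.isChain_cons_cons]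
    refine ⟨⟨by unfold knArc; omega, hchain⟩, List.isChain_singleton n, fun x hx y hy => ?_⟩
    have := hS x (List.mem_of_mem_getLast? hx)
    obtain rfl : n = y := by simpa using hy
    unfold knArc
    omega

theorem IsPath.exists_eq_knPath {n : ℕ} {P : List ℕ} (hP : IsPath (knArc n) 1 n P) :
    ∃ M, M ≠ [] ∧ M.Nodup ∧ (∀ v ∈ M, v ∈ Icc 2 (n - 1)) ∧ P = knPath n M := by
  obtain ⟨hlen, hhead, hlast, hnd, hch⟩ := hP
  obtain ⟨ys, rfl⟩ := List.getLast?_eq_some_iff.mp hlast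
  obtain ⟨T, hT⟩ := List.head?_eq_some_iff.mp hhead
  obtain _ | ⟨y, M⟩ := ys
  · simp at hlen
  obtain ⟨rfl, -⟩ : y = 1 ∧ M ++ [n] = T := by simpa using hT
  have hbound : ∀ v ∈ 1 :: M ++ [n], v = 1 ∨ v ∈ Icc 1 n :=
    List.IsChain.induction _ _ hch (fun _ _ hxy _ => Or.inr (mem_Icc.mpr ⟨hxy.2.2.1, hxy.2.2.2.1⟩))
      (fun _ => Or.inl rfl)
  simp only [List.cons_append, List.nodup_cons, List.nodup_append, List.mem_append,
    List.mem_singleton, not_or] at hnd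
  refine ⟨M, ?_, hnd.2.1, fun v hv => ?_, rfl⟩
  · rintro rfl
    exact hch.rel.2.2.2.2.2.2.2 ⟨rfl, rfl⟩
  · have hv1 : v ≠ 1 := fun h => hnd.1.1 (h ▸ hv)
    have hvn : v ≠ n := hnd.2.2.2 v hv n rfl
    have := (hbound v (by simp [hv])).resolve_left hv1
    simp only [mem_Icc] at this ⊢
    omega

theorem setOf_isPath_knArc_length_eq (n m : ℕ) :
    {P | IsPath (knArc n) 1 n P ∧ P.length = m + 3} =
      knPath n '' ↑(arrangements (Icc 2 (n - 1)) (m + 1)) := by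
  ext P
  simp only [Set.mem_ofPred_eq, Set.mem_image, mem_coe, mem_arrangements]
  constructor
  · rintro ⟨hP, hlen⟩
    obtain ⟨M, -, hnd, hS, rfl⟩ := hP.exists_eq_knPath
    exact ⟨M, ⟨hnd, by simpa [knPath] using hlen, hS⟩, rfl⟩
  · rintro ⟨M, ⟨hnd, hlen, hS⟩, rfl⟩
    exact ⟨isPath_knPath (List.ne_nil_of_length_eq_add_one hlen) hnd hS, by simp [knPath, hlen]⟩

theorem CPsum_add_two (n m : ℕ) (Q : ℕ × ℕ → ℕ × ℕ → ℝ) :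
    CPsum n Q (m + 2) =
      ∑ M ∈ arrangements (Icc 2 (n - 1)) (m + 1), quadForm Q (arcsOf (knPath n M)) := by
  change ∑ᶠ (P) (_ : P ∈ {P | IsPath (knArc n) 1 n P ∧ P.length = m + 3}), _ = _
  rw [setOf_isPath_knArc_length_eq, finsum_mem_image (knPath_injective n).injOn,
    finsum_mem_coe_finset]
  simp only [cost_zero_eq_quadForm]

theorem sub_five_mul_CPsum_le {n k : ℕ} {Q : ℕ × ℕ → ℕ × ℕ → ℝ} (hQ0 : ∀ e f, 0 ≤ Q e f)
    (hQd : ∀ e, Q e e = 0) (hk : 3 ≤ k) (hkn : k < n) :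
    ((k : ℝ) - 5) * CPsum n Q k ≤ ((n : ℝ) - k) * (((k : ℝ) - 3) * CPsum n Q (k - 1)) := by
  obtain ⟨m, rfl⟩ : ∃ m, k = m + 3 := ⟨k - 3, by omega⟩
  set S := Icc 2 (n - 1)
  have hS : #S - (m + 1) = n - (m + 3) := by simp only [S, Nat.card_Icc]; omega
  rw [show m + 3 = m + 1 + 2 from rfl, show m + 1 + 2 - 1 = m + 2 from rfl, CPsum_add_two,
    CPsum_add_two, mul_sum, mul_sum, mul_sum]
  calc ∑ M ∈ arrangements S (m + 2), ((m + 1 + 2 : ℕ) - 5 : ℝ) * quadForm Q (arcsOf (knPath n M))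
      ≤ ∑ M ∈ arrangements S (m + 2), ∑ j ∈ range (m + 2),
          quadForm Q ((arcsOf (knPath n M)).take j ++ (arcsOf (knPath n M)).drop (j + 2)) := by
        refine sum_le_sum fun M hM => ?_
        have hlen := length_arcsOf_knPath n M
        rw [(mem_arrangements.mp hM).2.1] at hlen
        refine Eq.trans_le ?_ (le_sum_quadForm_take_append_drop Q hQ0 (arcsOf (knPath n M))
          (N := m + 2) (r := 2) (by omega))
        push_cast
        ring
    _ = ∑ M ∈ arrangements S (m + 2), ∑ j ∈ range (m + 2),
          quadForm Q ((arcsOf (knPath n (M.eraseIdx j))).eraseIdx j) := by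
        refine sum_congr rfl fun M hM => sum_congr rfl fun j hj => ?_
        rw [knPath_eraseIdx n (by rw [(mem_arrangements.mp hM).2.1]; simpa using hj),
          eraseIdx_arcsOf_eraseIdx_succ]
    _ = ∑ M ∈ arrangements S (m + 1), (n - (m + 3)) •
          ∑ j ∈ range (m + 2), quadForm Q ((arcsOf (knPath n M)).eraseIdx j) := by
        rw [sum_arrangements_succ_eraseIdx S (m + 1)
          (fun M j => quadForm Q ((arcsOf (knPath n M)).eraseIdx j)), hS]
    _ ≤ ∑ M ∈ arrangements S (m + 1), ((n : ℝ) - (m + 1 + 2 : ℕ)) *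
          (((m + 1 + 2 : ℕ) - 3 : ℝ) * quadForm Q (arcsOf (knPath n M))) := by
        refine sum_le_sum fun M hM => ?_
        have hlen := length_arcsOf_knPath n M
        rw [(mem_arrangements.mp hM).2.1] at hlen
        rw [nsmul_eq_mul, Nat.cast_sub (by omega)]
        have hkn' : (m : ℝ) + 3 < n := by exact_mod_cast hkn
        refine mul_le_mul_of_nonneg_left ?_ (by push_cast; linarith)
        have h := sum_quadForm_eraseIdx_le Q hQ0 hQd (arcsOf (knPath n M))
        rw [hlen] at h
        refine h.trans_eq ?_
        push_cast
        ring

theorem stmt_9_general (n : ℕ) (Q : ℕ × ℕ → ℕ × ℕ → ℝ)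
    (hQ0 : ∀ e f, 0 ≤ Q e f) (hQd : ∀ e, Q e e = 0) :
    ∀ k, 6 ≤ k → k ≤ n - 1 →
      CPsum n Q k ≤
        ((n : ℝ) - k) * (((k : ℝ) - 3) / ((k : ℝ) - 5)) * CPsum n Q (k - 1) := by
  intro k hk6 hkn
  have hk5 : (0 : ℝ) < k - 5 := by
    have : (6 : ℝ) ≤ k := by exact_mod_cast hk6
    linarith
  rw [mul_div_assoc', div_mul_eq_mul_div, le_div_iff₀ hk5, mul_comm _ ((k : ℝ) - 5), mul_assoc]
  exact sub_five_mul_CPsum_le hQ0 hQd (by omega) (by omega)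

/-- On `K_n^*` (`n ≥ 7`), `CP_k ≤ (n-k)·((k-3)/(k-5))·CP_{k-1}` for `k = 6,…,n-1`. -/
theorem stmt_9 (n : ℕ) (hn : 7 ≤ n) (Q : ℕ × ℕ → ℕ × ℕ → ℝ)
    (hQ0 : ∀ e f, 0 ≤ Q e f) (hQs : ∀ e f, Q e f = Q f e) (hQd : ∀ e, Q e e = 0)
    (hQpath : ∀ e f,
      (¬ ∃ P, IsPath (knArc n) 1 n P ∧ e ∈ arcsOf P ∧ f ∈ arcsOf P) → Q e f = 0) :
    ∀ k, 6 ≤ k → k ≤ n - 1 →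
      CPsum n Q k ≤
        ((n : ℝ) - k) * (((k : ℝ) - 3) / ((k : ℝ) - 5)) * CPsum n Q (k - 1) :=
  stmt_9_general n Q hQ0 hQd
end
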